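/- Let R ⊂ ℝ² be the closed square with vertices (±1/√2, 0) and (0, ±1/√2), let χ_R be its characteristic function, g = χ_R * χ_R the self-convolution, and ĝ its Fourier transform (with convention ĝ(ξ) = ∫ g(x)e^{−2πi x·ξ}dx). Define f = ĝ − g. Then: (i) the Fourier transform of f is −f; (ii) f(0,0) = 0; and (iii) f(x, x̄) ≥ 0 for all (x, x̄) ∈ ℝ² with x² + x̄² ≥ 1 and x² − x̄² ∈ 2ℤ. -/

import Mathlib

open MeasureTheory Real

noncomputable section

/-- The closed square with vertices `(±1/√2, 0)` and `(0, ±1/√2)`. -/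
def Rsq : Set (EuclideanSpace ℝ (Fin 2)) :=
  {p | |p 0| + |p 1| ≤ 1 / Real.sqrt 2}

/-- The characteristic function of the square `Rsq`. -/
def chiR : EuclideanSpace ℝ (Fin 2) → ℂ := Set.indicator Rsq 1

/-- The self-convolution `g = χ_R * χ_R`. -/
def gfun (w : EuclideanSpace ℝ (Fin 2)) : ℂ := ∫ t, chiR t * chiR (w - t)

/-- `f = ĝ − g`. -/
def ffun : EuclideanSpace ℝ (Fin 2) → ℂ :=
  fun w => FourierTransform.fourier gfun w - gfun w

end

/-!
In the rotated coordinates `rot x = ((x₀ + x₁)/√2, (x₀ - x₁)/√2)` the square `R` is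
`[-1/2, 1/2]²`, so everything splits into one-dimensional factors: `g = (Λ ⊗ Λ) ∘ rot` with
`Λ = box ⋆ box` the triangle function, and `ĝ = (F ⊗ F) ∘ rot` with `F = Λ̂ = sinc(π ·)²` the
Fejér kernel. As `Λ` is even, Fourier inversion gives `F̂ = Λ`, hence `𝓕 (𝓕 g) = g` and
`𝓕 f = g - ĝ = -f`. At the origin `g = ĝ = 1`. On the lattice region the rotated coordinates
`a, b` satisfy `a b ∈ ℤ` and `a² + b² ≥ 1`, which is incompatible with `|a|, |b| < 1`; so `g`
vanishes there and `f = ĝ ≥ 0`.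
-/

open FourierTransform Convolution RealInnerProductSpace

noncomputable section

namespace SquareAutocorrelation

lemma fourier_sub {V E : Type*} [NormedAddCommGroup V] [InnerProductSpace ℝ V]
    [MeasurableSpace V] [BorelSpace V] [FiniteDimensional ℝ V] [NormedAddCommGroup E]
    [NormedSpace ℂ E] {f g : V → E} (hf : Integrable f) (hg : Integrable g) :
    𝓕 (f - g) = 𝓕 f - 𝓕 g := by
  ext w
  have hL : Continuous fun p : V × V => innerₗ V p.1 p.2 := continuous_inner
  simp only [Real.fourier_eq, Pi.sub_apply, smul_sub]
  exact integral_sub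
    ((VectorFourier.fourierIntegral_convergent_iff continuous_fourierChar hL w).2 hf)
    ((VectorFourier.fourierIntegral_convergent_iff continuous_fourierChar hL w).2 hg)

def box : ℝ → ℂ := Set.indicator (Set.Icc (-(1 / 2)) (1 / 2)) 1

def tri (u : ℝ) : ℝ := max (1 - |u|) 0

def fejer (u : ℝ) : ℝ := sinc (π * u) ^ 2

lemma tri_zero : tri 0 = 1 := by simp [tri]

lemma tri_neg (u : ℝ) : tri (-u) = tri u := by simp [tri]

lemma tri_eq_zero_of_one_le_abs {u : ℝ} (hu : 1 ≤ |u|) : tri u = 0 :=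
  max_eq_right (by linarith)

lemma continuous_tri : Continuous tri := by unfold tri; fun_prop

lemma integrable_box : Integrable box :=
  (integrableOn_const measure_Icc_lt_top.ne).integrable_indicator measurableSet_Icc

lemma box_conv_box : box ⋆[ContinuousLinearMap.mul ℂ ℂ] box = fun u => (tri u : ℂ) := by
  ext a
  have hbox : ∀ t, box (a - t) = (Set.Icc (a - 1 / 2) (a + 1 / 2)).indicator 1 t := by
    intro t
    simp only [box, Set.indicator_apply, Set.mem_Icc]
    congr 1
    exact propext ⟨fun h => ⟨by linarith [h.2], by linarith [h.1]⟩,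
      fun h => ⟨by linarith [h.2], by linarith [h.1]⟩⟩
  have hlen : min (1 / 2) (a + 1 / 2) - max (-(1 / 2)) (a - 1 / 2) = 1 - |a| := by
    rcases le_total 0 a with ha | ha
    · rw [abs_of_nonneg ha, min_eq_left (by linarith), max_eq_right (by linarith)]; ring
    · rw [abs_of_nonpos ha, min_eq_right (by linarith), max_eq_left (by linarith)]; ring
  have hprod : ∀ t, box t * box (a - t) = (Set.Icc (max (-(1 / 2)) (a - 1 / 2))
      (min (1 / 2) (a + 1 / 2))).indicator (fun _ => 1) t := by
    intro t
    rw [hbox, box, ← Pi.mul_apply _ _ t, ← Set.inter_indicator_one, Set.Icc_inter_Icc]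
    rfl
  simp only [convolution_def, ContinuousLinearMap.mul_apply', hprod]
  rw [integral_indicator_const (1 : ℂ) measurableSet_Icc, volume_real_Icc, hlen, tri,
    Complex.real_smul, mul_one]

lemma integrable_tri : Integrable fun u => (tri u : ℂ) :=
  box_conv_box ▸ integrable_box.integrable_convolution _ integrable_box

lemma fourier_box (u : ℝ) : 𝓕 box u = sinc (π * u) := by
  set c : ℂ := -2 * π * u * Complex.I
  have hinterval : 𝓕 box u = ∫ v in (-(1 / 2) : ℝ)..(1 / 2), Complex.exp (c * v) := by
    rw [Real.fourier_real_eq_integral_exp_smul, intervalIntegral.integral_of_le (by norm_num),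
      ← integral_Icc_eq_integral_Ioc, ← integral_indicator measurableSet_Icc]
    congr 1 with v
    simp only [box, Set.indicator_apply]
    split_ifs
    · simp only [Pi.one_apply, smul_eq_mul, mul_one, c]
      push_cast
      ring_nf
    · simp
  rcases eq_or_ne u 0 with rfl | hu
  · norm_num [hinterval, c]
  have hπu : (π * u : ℂ) ≠ 0 := by exact_mod_cast mul_ne_zero pi_ne_zero hu
  have hc : c ≠ 0 := by simp [c, hu, pi_ne_zero]
  rw [hinterval, integral_exp_mul_complex hc, sinc_of_ne_zero (mul_ne_zero pi_ne_zero hu)]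
  have hsin := Complex.two_sin (π * u)
  push_cast
  rw [show c * (1 / 2) = -(π * u) * Complex.I by simp only [c]; ring,
    show c * -(1 / 2) = (π * u) * Complex.I by simp only [c]; ring]
  rw [div_eq_div_iff hc hπu]
  linear_combination (π * u : ℂ) * Complex.I * hsin + (Complex.exp (-(π * u) * Complex.I) -
    Complex.exp (π * u * Complex.I)) * (π * u) * Complex.I_sq

lemma fourier_tri : 𝓕 (fun u => (tri u : ℂ)) = fun u => (fejer u : ℂ) := by
  ext u
  rw [← box_conv_box, Real.fourier_mul_convolution_eq integrable_box integrable_box,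
    fourier_box, fejer]
  push_cast; ring

lemma fejer_nonneg (u : ℝ) : 0 ≤ fejer u := sq_nonneg _

lemma fejer_zero : fejer 0 = 1 := by simp [fejer]

lemma fejer_le (u : ℝ) : fejer u ≤ 2 * (1 + u ^ 2)⁻¹ := by
  rw [← div_eq_mul_inv]
  rcases le_total (u ^ 2) 1 with h | h
  · calc fejer u ≤ 1 := by
          rw [fejer, ← sq_abs]; exact pow_le_one₀ (abs_nonneg _) (abs_sinc_le_one _)
      _ ≤ _ := by rw [le_div_iff₀ (by positivity)]; linarith
  · have hu : u ≠ 0 := by rintro rfl; norm_num at h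
    calc fejer u = sin (π * u) ^ 2 / (π * u) ^ 2 := by
          rw [fejer, sinc_of_ne_zero (mul_ne_zero pi_ne_zero hu), div_pow]
      _ ≤ 1 / u ^ 2 := by
          refine div_le_div₀ zero_le_one (sin_sq_le_one _) (by positivity) ?_
          rw [mul_pow]; exact le_mul_of_one_le_left (sq_nonneg u) (by nlinarith [pi_gt_three])
      _ ≤ _ := by rw [div_le_div_iff₀ (by positivity) (by positivity)]; linarith

lemma integrable_fejer : Integrable fun u => (fejer u : ℂ) := by
  refine (integrable_inv_one_add_sq.const_mul 2).mono' ?_ (ae_of_all _ fun u => ?_)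
  · exact (Complex.continuous_ofReal.comp
      ((continuous_sinc.comp (continuous_const.mul continuous_id)).pow 2)).aestronglyMeasurable
  · rw [Complex.norm_real, norm_of_nonneg (fejer_nonneg u)]
    exact fejer_le u

lemma fourier_fejer : 𝓕 (fun u => (fejer u : ℂ)) = fun u => (tri u : ℂ) := by
  have hinv : 𝓕⁻ (𝓕 fun u => (tri u : ℂ)) = fun u => (tri u : ℂ) :=
    (Complex.continuous_ofReal.comp continuous_tri).fourierInv_fourier_eq integrable_tri
      (fourier_tri ▸ integrable_fejer)
  ext u
  rw [← fourier_tri, ← neg_neg u, ← Real.fourierInv_eq_fourier_neg, hinv, tri_neg]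

local notation "ℝ²" => EuclideanSpace ℝ (Fin 2)

def tensor (φ ψ : ℝ → ℂ) (x : ℝ²) : ℂ := φ (x 0) * ψ (x 1)

def measurableEquivProd : ℝ² ≃ᵐ ℝ × ℝ :=
  (MeasurableEquiv.toLp 2 (Fin 2 → ℝ)).symm.trans (MeasurableEquiv.piFinTwo fun _ => ℝ)

lemma measurePreserving_measurableEquivProd : MeasurePreserving measurableEquivProd :=
  (volume_preserving_piFinTwo fun _ => ℝ).comp
    (EuclideanSpace.volume_preserving_symm_measurableEquiv_toLp (Fin 2))

lemma integral_tensor (φ ψ : ℝ → ℂ) : ∫ x, tensor φ ψ x = (∫ a, φ a) * ∫ b, ψ b := by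
  rw [← integral_prod_mul, ← Measure.volume_eq_prod,
    ← measurePreserving_measurableEquivProd.integral_comp']
  rfl

lemma integrable_tensor {φ ψ : ℝ → ℂ} (hφ : Integrable φ) (hψ : Integrable ψ) :
    Integrable (tensor φ ψ) :=
  (measurePreserving_measurableEquivProd.integrable_comp_emb
    measurableEquivProd.measurableEmbedding (g := fun z : ℝ × ℝ => φ z.1 * ψ z.2)).2
    (Measure.volume_eq_prod ℝ ℝ ▸ hφ.mul_prod hψ)

lemma fourier_tensor (φ ψ : ℝ → ℂ) : 𝓕 (tensor φ ψ) = tensor (𝓕 φ) (𝓕 ψ) := by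
  ext ξ
  have hsplit : ∀ x : ℝ², 𝐞 (-⟪x, ξ⟫) • tensor φ ψ x =
      tensor (fun a => 𝐞 (-(a * ξ 0)) • φ a) (fun b => 𝐞 (-(b * ξ 1)) • ψ b) x := by
    intro x
    simp only [tensor, PiLp.inner_apply, Fin.sum_univ_two, RCLike.inner_apply, conj_trivial,
      neg_add, AddChar.map_add_eq_mul, Circle.smul_def, Circle.coe_mul, smul_eq_mul]
    ring_nf
  rw [Real.fourier_eq, integral_congr_ae (ae_of_all _ hsplit), integral_tensor, tensor,
    Real.fourier_real_eq, Real.fourier_real_eq]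

def rot : ℝ² ≃ₗᵢ[ℝ] ℝ² where
  toFun x := !₂[(x 0 + x 1) / √2, (x 0 - x 1) / √2]
  invFun x := !₂[(x 0 + x 1) / √2, (x 0 - x 1) / √2]
  left_inv x := by ext i; fin_cases i <;> simp [← add_div, ← sub_div, div_div]
  right_inv x := by ext i; fin_cases i <;> simp [← add_div, ← sub_div, div_div]
  map_add' x y := by ext i; fin_cases i <;> simp <;> ring
  map_smul' c x := by ext i; fin_cases i <;> simp <;> ring
  norm_map' x := by
    simp [EuclideanSpace.norm_eq, Fin.sum_univ_two, div_pow]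
    congr 1
    ring

@[simp] lemma rot_apply_zero (x : ℝ²) : rot x 0 = (x 0 + x 1) / √2 := rfl

@[simp] lemma rot_apply_one (x : ℝ²) : rot x 1 = (x 0 - x 1) / √2 := rfl

lemma abs_add_abs_le_iff {a b c : ℝ} : |a| + |b| ≤ c ↔ |a + b| ≤ c ∧ |a - b| ≤ c := by
  refine ⟨fun h => ⟨(abs_add_le a b).trans h, (abs_sub a b).trans h⟩, fun ⟨h₁, h₂⟩ => ?_⟩
  rw [abs_le] at h₁ h₂
  rcases abs_cases a with ⟨ha, _⟩ | ⟨ha, _⟩ <;> rcases abs_cases b with ⟨hb, _⟩ | ⟨hb, _⟩ <;>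
    rw [ha, hb] <;> linarith

lemma chiR_eq : chiR = tensor box box ∘ rot := by
  have hsqrt : 0 < √2 := sqrt_pos.2 two_pos
  have hbox : ∀ t : ℝ, t / √2 ∈ Set.Icc (-(1 / 2)) (1 / 2) ↔ |t| ≤ 1 / √2 := by
    intro t
    have h : (1 : ℝ) / √2 / √2 = 1 / 2 := by rw [div_div, mul_self_sqrt zero_le_two]
    rw [Set.mem_Icc, ← abs_le, abs_div, abs_of_pos hsqrt, ← h,
      div_le_div_iff_of_pos_right hsqrt]
  ext x
  have hmem : x ∈ Rsq ↔ rot x 0 ∈ Set.Icc (-(1 / 2)) (1 / 2) ∧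
      rot x 1 ∈ Set.Icc (-(1 / 2)) (1 / 2) := by
    rw [rot_apply_zero, rot_apply_one, hbox, hbox]
    exact abs_add_abs_le_iff
  simp only [chiR, tensor, box, Function.comp_apply]
  by_cases h : x ∈ Rsq
  · rw [Set.indicator_of_mem h, Set.indicator_of_mem (hmem.1 h).1,
      Set.indicator_of_mem (hmem.1 h).2]
    exact (one_mul 1).symm
  · rw [Set.indicator_of_notMem h]
    rcases not_and_or.1 (hmem.not.1 h) with h' | h'
    · rw [Set.indicator_of_notMem h', zero_mul]
    · rw [Set.indicator_of_notMem h', mul_zero]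

lemma gfun_eq : gfun = tensor (fun u => (tri u : ℂ)) (fun u => (tri u : ℂ)) ∘ rot := by
  ext w
  calc gfun w = ∫ t, tensor box box (rot t) * tensor box box (rot w - rot t) := by
        simp only [gfun, chiR_eq, Function.comp_apply, map_sub]
    _ = ∫ s, tensor box box s * tensor box box (rot w - s) :=
        rot.measurePreserving.integral_comp rot.toHomeomorph.measurableEmbedding
          (fun s => tensor box box s * tensor box box (rot w - s))
    _ = ∫ s, tensor (fun a => box a * box (rot w 0 - a))
          (fun b => box b * box (rot w 1 - b)) s := by
        congr 1 with s
        simp only [tensor, PiLp.sub_apply]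
        ring
    _ = _ := by
        rw [integral_tensor, ← box_conv_box]
        rfl

lemma fourier_gfun :
    𝓕 gfun = tensor (fun u => (fejer u : ℂ)) (fun u => (fejer u : ℂ)) ∘ rot := by
  ext w
  rw [gfun_eq, Real.fourier_comp_linearIsometry, fourier_tensor, fourier_tri]
  rfl

lemma fourier_fourier_gfun : 𝓕 (𝓕 gfun) = gfun := by
  ext w
  rw [fourier_gfun, Real.fourier_comp_linearIsometry, fourier_tensor, fourier_fejer, gfun_eq]
  rfl

lemma integrable_gfun : Integrable gfun := by
  rw [gfun_eq]
  exact rot.measurePreserving.integrable_comp_of_integrable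
    (integrable_tensor integrable_tri integrable_tri)

lemma integrable_fourier_gfun : Integrable (𝓕 gfun) := by
  rw [fourier_gfun]
  exact rot.measurePreserving.integrable_comp_of_integrable
    (integrable_tensor integrable_fejer integrable_fejer)

lemma tri_mul_tri_eq_zero {a b : ℝ} {k : ℤ} (hab : a * b = k) (h : 1 ≤ a ^ 2 + b ^ 2) :
    tri a * tri b = 0 := by
  by_contra hne
  have ha : |a| < 1 := lt_of_not_ge fun ha => hne (by rw [tri_eq_zero_of_one_le_abs ha, zero_mul])
  have hb : |b| < 1 := lt_of_not_ge fun hb => hne (by rw [tri_eq_zero_of_one_le_abs hb, mul_zero])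
  have hk : |(k : ℝ)| < 1 := by
    rw [← hab, abs_mul]
    nlinarith [abs_nonneg a, abs_nonneg b]
  rw [← Int.cast_abs, ← Int.cast_one, Int.cast_lt, Int.abs_lt_one_iff] at hk
  rw [hk, Int.cast_zero, mul_eq_zero] at hab
  rcases hab with rfl | rfl
  · nlinarith [sq_abs b, abs_nonneg b]
  · nlinarith [sq_abs a, abs_nonneg a]

lemma ffun_eq (p : ℝ²) : ffun p =
    ((fejer (rot p 0) * fejer (rot p 1) - tri (rot p 0) * tri (rot p 1) : ℝ) : ℂ) := by
  rw [ffun, fourier_gfun, gfun_eq]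
  push_cast
  rfl

end SquareAutocorrelation

open SquareAutocorrelation in
theorem stmt11 :
    (FourierTransform.fourier ffun = fun w => -ffun w) ∧
      ffun 0 = 0 ∧
      (∀ p : EuclideanSpace ℝ (Fin 2), 1 ≤ (p 0) ^ 2 + (p 1) ^ 2 →
        (∃ k : ℤ, (p 0) ^ 2 - (p 1) ^ 2 = 2 * k) →
        (ffun p).im = 0 ∧ 0 ≤ (ffun p).re) := by
  refine ⟨?_, ?_, fun p hp ⟨k, hk⟩ => ?_⟩
  · have hf : ffun = 𝓕 gfun - gfun := rfl
    rw [hf, fourier_sub integrable_fourier_gfun integrable_gfun, fourier_fourier_gfun]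
    ext w
    simp
  · simp [ffun_eq, fejer_zero, tri_zero]
  · have hab : rot p 0 * rot p 1 = k := by
      rw [rot_apply_zero, rot_apply_one, div_mul_div_comm, mul_self_sqrt zero_le_two]
      linear_combination hk / 2
    have hnorm : rot p 0 ^ 2 + rot p 1 ^ 2 = p 0 ^ 2 + p 1 ^ 2 := by
      rw [rot_apply_zero, rot_apply_one, div_pow, div_pow, sq_sqrt zero_le_two]
      ring
    rw [ffun_eq, tri_mul_tri_eq_zero hab (hnorm ▸ hp), sub_zero]
    exact ⟨Complex.ofReal_im _, mul_nonneg (fejer_nonneg _) (fejer_nonneg _)⟩
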